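/- For each $r \in [0,\infty]$, the map $\theta(r): \Lambda \to \mathbb{L}$ defined on the monomial basis by $\theta(r)(m_{(n)}) = nr$ for one-part partitions $(n)$ and $\theta(r)(m_\lambda) = \infty$ for all other partitions, is a rig homomorphism from $\Lambda$ to the min-plus rig $\mathbb{L}$. -/

import Mathlib

open scoped Classical ENNReal
open Tropical

noncomputable section

/-- The Lawvere quantale `𝕃 = [0,∞]` viewed as a rig: addition is `min`, multiplication is `+`. -/
abbrev Trop : Type := Tropical ℝ≥0∞

/-- Coefficient of a formal power series in infinitely many variables. -/
def cf {σ : Type} (φ : MvPowerSeries σ ℕ) (d : σ →₀ ℕ) : ℕ := MvPowerSeries.coeff d φ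

/-- The multiset of nonzero entries of an exponent vector. -/
def parts (d : ℕ →₀ ℕ) : Multiset ℕ := d.support.val.map d

lemma zero_not_mem_parts (d : ℕ →₀ ℕ) : (0 : ℕ) ∉ parts d := by
  intro h
  obtain ⟨a, ha, ha0⟩ := Multiset.mem_map.mp h
  exact Finsupp.mem_support_iff.mp (Finset.mem_val.mp ha) ha0

/-- Partitions: multisets of positive natural numbers. -/
def Ptn : Type := {s : Multiset ℕ // (0 : ℕ) ∉ s}

/-- The monomial symmetric function `m_λ`, as a symmetric power series of bounded degree
in the variables `x_0, x_1, x_2, …`. -/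
def mfun (l : Multiset ℕ) : MvPowerSeries ℕ ℕ := fun d => if parts d = l then 1 else 0

/-- `Λ`, the rig of symmetric functions with coefficients in `ℕ`: the subsemiring of
power series generated by the monomial symmetric functions. -/
def Lam : Subsemiring (MvPowerSeries ℕ ℕ) :=
  Subsemiring.closure (Set.range fun l : Ptn => mfun l.1)

/-- `m_λ` as an element of `Λ`. -/
def mP (l : Ptn) : Lam := ⟨mfun l.1, Subsemiring.subset_closure (Set.mem_range_self l)⟩

/-- The one-part partition `(n)`. -/
def pnat (n : ℕ) (hn : 0 < n) : Ptn := ⟨{n}, fun h => hn.ne' (Multiset.mem_singleton.mp h).symm⟩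

/-- The Witt vectors of the Lawvere quantale: rig homomorphisms `Λ → 𝕃`. -/
abbrev WL := Lam →+* Trop

/-- Row margin of an exponent vector on `ℕ × ℕ`. -/
def rowM (e : (ℕ × ℕ) →₀ ℕ) : ℕ →₀ ℕ := e.mapDomain Prod.fst
/-- Column margin of an exponent vector on `ℕ × ℕ`. -/
def colM (e : (ℕ × ℕ) →₀ ℕ) : ℕ →₀ ℕ := e.mapDomain Prod.snd

/-- The elementary tensor `a ⊗ b` in `Λ ⊗ Λ`, realized as a power series on variables
`x_i ⊗ x_j` indexed by `ℕ × ℕ`. -/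
def tens (a b : MvPowerSeries ℕ ℕ) : MvPowerSeries (ℕ × ℕ) ℕ :=
  fun e => cf a (rowM e) * cf b (colM e)

/-- Comultiplication `Δ^×`: substitute the family `x_i ⊗ x_j` for the variables,
along a bijection `ℕ ≃ ℕ × ℕ`. -/
def Dmul (eqt : ℕ ≃ ℕ × ℕ) (φ : MvPowerSeries ℕ ℕ) : MvPowerSeries (ℕ × ℕ) ℕ :=
  fun e => cf φ (Finsupp.equivMapDomain eqt.symm e)

/-- Left margin of an exponent vector on `ℕ ⊕ ℕ`. -/
def lM (e : (ℕ ⊕ ℕ) →₀ ℕ) : ℕ →₀ ℕ := Finsupp.comapDomain Sum.inl e Sum.inl_injective.injOn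
/-- Right margin of an exponent vector on `ℕ ⊕ ℕ`. -/
def rM (e : (ℕ ⊕ ℕ) →₀ ℕ) : ℕ →₀ ℕ := Finsupp.comapDomain Sum.inr e Sum.inr_injective.injOn

/-- The elementary tensor `a ⊗ b` realized as a power series on `ℕ ⊕ ℕ`. -/
def tensP (a b : MvPowerSeries ℕ ℕ) : MvPowerSeries (ℕ ⊕ ℕ) ℕ :=
  fun e => cf a (lM e) * cf b (rM e)

/-- Coaddition `Δ^+`: substitute `x_i ⊗ 1` and `1 ⊗ x_i` for the variables,
along a bijection `ℕ ≃ ℕ ⊕ ℕ`. -/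
def Dadd (eqp : ℕ ≃ ℕ ⊕ ℕ) (φ : MvPowerSeries ℕ ℕ) : MvPowerSeries (ℕ ⊕ ℕ) ℕ :=
  fun e => cf φ (Finsupp.equivMapDomain eqp.symm e)

/-- The order on `𝕎(𝕃)`: `f ≤ g` iff `g (m_λ) ≤ f (m_λ)` (usual order on `[0,∞]`)
for every partition `λ ∈ ℙ`. -/
def leF (F G : Lam → Trop) : Prop :=
  ∀ l : Ptn, l.1 ≠ 0 → untrop (G (mP l)) ≤ untrop (F (mP l))

/-- Witt multiplication: `(f ⊗ g)(φ) = min` of `f(m_μ) + g(m_μ')` over the pairs `(μ, μ')`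
occurring in `Δ^×(φ)`. -/
def wmulF (eqt : ℕ ≃ ℕ × ℕ) (F G : Lam → Trop) : Lam → Trop := fun φ =>
  trop (sInf {x : ℝ≥0∞ | ∃ e, cf (Dmul eqt (φ : MvPowerSeries ℕ ℕ)) e ≠ 0 ∧
    x = untrop (F (mP ⟨parts (rowM e), zero_not_mem_parts _⟩)) +
        untrop (G (mP ⟨parts (colM e), zero_not_mem_parts _⟩))})

/-- Witt addition: `(f ⊕ g)(φ) = min` of `f(m_μ) + g(m_μ')` over the pairs `(μ, μ')`
occurring in `Δ^+(φ)`. -/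
def waddF (eqp : ℕ ≃ ℕ ⊕ ℕ) (F G : Lam → Trop) : Lam → Trop := fun φ =>
  trop (sInf {x : ℝ≥0∞ | ∃ e, cf (Dadd eqp (φ : MvPowerSeries ℕ ℕ)) e ≠ 0 ∧
    x = untrop (F (mP ⟨parts (lM e), zero_not_mem_parts _⟩)) +
        untrop (G (mP ⟨parts (rM e), zero_not_mem_parts _⟩))})

/-- Specification of the multiplicative unit `0̄` of `𝕎(𝕃)`:
`0̄(m_(n)) = 0` for one-part partitions and `0̄(m_λ) = ∞` otherwise. -/
def zbar (z : WL) : Prop :=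
  ∀ l : Ptn, z (mP l) = if l.1.card ≤ 1 then trop (0 : ℝ≥0∞) else trop (⊤ : ℝ≥0∞)

/-! Setting every variable except `x₀` to zero turns a series `φ` into a one-variable
series whose support `S(φ) ⊆ ℕ` satisfies `S(φ + ψ) = S(φ) ∪ S(ψ)` and
`S(φ ψ) = S(φ) + S(ψ)`, because coefficients in `ℕ` can neither cancel nor multiply to zero.
Hence `φ ↦ min_{n ∈ S(φ)} n·r` is a rig homomorphism to `𝕃` on all power series, not only
on `Λ`. On `m_λ` the set `S(m_λ)` is `{n}` if `λ = (n)` and empty for every other nonempty `λ`,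
giving the prescribed values. -/

section SupportAlong

open scoped Pointwise
open Finset.HasAntidiagonal

variable {σ : Type*} (i : σ)

def supportAlong (φ : MvPowerSeries σ ℕ) : Set ℕ :=
  {n | MvPowerSeries.coeff (Finsupp.single i n) φ ≠ 0}

@[simp]
lemma supportAlong_zero : supportAlong i 0 = ∅ := by
  simp [supportAlong]

@[simp]
lemma supportAlong_one : supportAlong i 1 = {0} := by
  ext n
  simp [supportAlong, MvPowerSeries.coeff_one, Finsupp.single_eq_zero]

lemma supportAlong_add (φ ψ : MvPowerSeries σ ℕ) :
    supportAlong i (φ + ψ) = supportAlong i φ ∪ supportAlong i ψ := by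
  ext n
  simp only [supportAlong, Set.mem_ofPred_eq, map_add, Set.mem_union]
  omega

lemma coeff_single_mul {R : Type*} [CommSemiring R] (φ ψ : MvPowerSeries σ R) (n : ℕ) :
    MvPowerSeries.coeff (Finsupp.single i n) (φ * ψ) = ∑ p ∈ antidiagonal n,
      MvPowerSeries.coeff (Finsupp.single i p.1) φ * MvPowerSeries.coeff (Finsupp.single i p.2) ψ := by
  rw [MvPowerSeries.coeff_mul, Finsupp.antidiagonal_single, Finset.sum_map]
  rfl

lemma supportAlong_mul (φ ψ : MvPowerSeries σ ℕ) :
    supportAlong i (φ * ψ) = supportAlong i φ + supportAlong i ψ := by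
  ext n
  simp only [supportAlong, Set.mem_ofPred_eq, Set.mem_add, coeff_single_mul, ne_eq,
    Finset.sum_eq_zero_iff, not_forall, mul_eq_zero, not_or, mem_antidiagonal,
    Prod.exists, exists_prop]
  constructor
  · rintro ⟨a, b, rfl, ha, hb⟩
    exact ⟨a, ha, b, hb, rfl⟩
  · rintro ⟨a, ha, b, hb, rfl⟩
    exact ⟨a, b, rfl, ha, hb⟩

end SupportAlong

def minWeight (r : ℝ≥0∞) (S : Set ℕ) : ℝ≥0∞ := ⨅ n ∈ S, (n : ℝ≥0∞) * r

section MinWeight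

open scoped Pointwise

variable (r : ℝ≥0∞)

@[simp]
lemma minWeight_empty : minWeight r ∅ = ⊤ := by
  simp [minWeight]

@[simp]
lemma minWeight_singleton (n : ℕ) : minWeight r {n} = n * r := by
  simp [minWeight]

lemma minWeight_union (S T : Set ℕ) :
    minWeight r (S ∪ T) = min (minWeight r S) (minWeight r T) :=
  iInf_union

lemma minWeight_add (S T : Set ℕ) :
    minWeight r (S + T) = minWeight r S + minWeight r T := by
  simp only [minWeight, ← Set.image2_add, iInf_image2, Nat.cast_add, add_mul]
  simp only [ENNReal.iInf_add]
  simp only [ENNReal.add_iInf]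

end MinWeight

def tropicalValuation {σ : Type*} (i : σ) (r : ℝ≥0∞) : MvPowerSeries σ ℕ →+* Trop where
  toFun φ := trop (minWeight r (supportAlong i φ))
  map_zero' := by simp
  map_one' := by simp
  map_add' φ ψ := by simp [supportAlong_add, minWeight_union, trop_min]
  map_mul' φ ψ := by simp [supportAlong_mul, minWeight_add, trop_add]

lemma parts_zero : parts 0 = 0 := rfl

lemma parts_single {i n : ℕ} (hn : n ≠ 0) : parts (Finsupp.single i n) = {n} := by
  simp [parts, Finsupp.support_single, hn]

lemma supportAlong_mfun (l : Ptn) (hl : l.1 ≠ 0) :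
    supportAlong 0 (mfun l.1) = {n | l.1 = {n}} := by
  ext n
  simp only [supportAlong, mfun, MvPowerSeries.coeff_apply, Set.mem_ofPred_eq, ne_eq,
    ite_eq_right_iff, one_ne_zero, imp_false, not_not]
  rcases eq_or_ne n 0 with rfl | hn
  · rw [Finsupp.single_zero, parts_zero]
    exact iff_of_false hl.symm fun h => l.2 (h ▸ Multiset.mem_singleton_self 0)
  · rw [parts_single hn, eq_comm]

/-- For each `r ∈ [0,∞]`, the map `θ(r) : Λ → 𝕃` defined on the monomial basis by
`θ(r)(m_(n)) = n·r` for one-part partitions `(n)` and `θ(r)(m_λ) = ∞` for all other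
(nonempty) partitions, is a rig homomorphism from `Λ` to the min-plus rig `𝕃`. -/
theorem theta_is_rig_hom (r : ℝ≥0∞) :
    ∃ F : WL, ∀ l : Ptn, l.1 ≠ 0 →
      F (mP l) = if l.1.card = 1 then trop ((l.1.sum : ℝ≥0∞) * r)
                 else trop (⊤ : ℝ≥0∞) := by
  refine ⟨(tropicalValuation 0 r).comp Lam.subtype, fun l hl => ?_⟩
  change trop (minWeight r (supportAlong 0 (mfun l.1))) = _
  rw [supportAlong_mfun l hl]
  split_ifs with hcard
  · obtain ⟨k, hk⟩ := Multiset.card_eq_one.mp hcard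
    simp [hk]
  · have hempty : {n | l.1 = {n}} = ∅ := Set.eq_empty_iff_forall_notMem.2 fun n hn =>
      hcard (by rw [show l.1 = {n} from hn, Multiset.card_singleton])
    rw [hempty, minWeight_empty]

end
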